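/- Lemma 2.1 (normalized form for two equal halves): Let A, B : Fin 26 → ℕ be sorted-in-nondecreasing-order frequency vectors each summing to n > 0, and let C be the nondecreasing rearrangement of A + B (which sums to 2n). Then (1/(2n))·[(∑_{i=13}^{25} C(i)) − (∑_{i=0}^{12} C(i))] ≤ (1/2)·[(1/n)((∑_{i=13}^{25} A(i)) − (∑_{i=0}^{12} A(i))) + (1/n)((∑_{i=13}^{25} B(i)) − (∑_{i=0}^{12} B(i)))], working in ℚ. -/

import Mathlib

/-!
Write the twist of a vector as twice its upper-half sum minus its total. The total of the merged
vector `(A + B) ∘ σ` is the sum of the totals of `A` and `B`, and by the rearrangement inequality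
permuting a monotone vector can only decrease its upper-half sum. Hence the twist is subadditive
under merging, and the normalizing factors `1 / (2n)` and `1/2 · 1/n` coincide.
-/

open Finset

section
variable {ι β : Type*} [Fintype ι] (p : ι → Prop) [DecidablePred p]

/-- For `p i := 13 ≤ i` on `Fin 26` and a sorted `u`, this is the paper's twist of `u`,
before normalization. -/
def twist [AddCommGroup β] (u : ι → β) : β :=
  ∑ i ∈ univ.filter p, u i - ∑ i ∈ univ.filter (fun i => ¬ p i), u i

variable {p}

theorem sum_filter_comp_perm_le_of_monotone [LinearOrder ι] [AddCommMonoid β] [LinearOrder β]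
    [IsOrderedCancelAddMonoid β] (hp : Monotone p) {u : ι → β} (hu : Monotone u)
    (σ : Equiv.Perm ι) :
    ∑ i ∈ univ.filter p, u (σ i) ≤ ∑ i ∈ univ.filter p, u i := by
  have hind : Monotone fun i => if p i then 1 else (0 : ℕ) := fun i j hij => by
    by_cases hi : p i
    · simp [hi, hp hij hi]
    · simp [hi]
  simpa [sum_filter, ite_smul] using
    (hind.monovary hu).sum_smul_comp_perm_le_sum_smul (σ := σ)

theorem twist_eq [AddCommGroup β] (u : ι → β) :
    twist p u = 2 • ∑ i ∈ univ.filter p, u i - ∑ i, u i := by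
  rw [twist, ← sum_filter_add_sum_filter_not univ p u]
  abel

theorem twist_comp_perm_add_le [LinearOrder ι] [AddCommGroup β] [LinearOrder β]
    [IsOrderedAddMonoid β] (hp : Monotone p) {u v : ι → β} (hu : Monotone u) (hv : Monotone v)
    (σ : Equiv.Perm ι) :
    twist p (fun i => u (σ i) + v (σ i)) ≤ twist p u + twist p v := by
  have hupper : ∑ i ∈ univ.filter p, (u (σ i) + v (σ i)) ≤
      ∑ i ∈ univ.filter p, u i + ∑ i ∈ univ.filter p, v i := by
    rw [sum_add_distrib]
    exact add_le_add (sum_filter_comp_perm_le_of_monotone hp hu σ)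
      (sum_filter_comp_perm_le_of_monotone hp hv σ)
  have htotal : ∑ i, (u (σ i) + v (σ i)) = ∑ i, u i + ∑ i, v i := by
    rw [Equiv.sum_comp σ (fun i => u i + v i), sum_add_distrib]
  calc twist p (fun i => u (σ i) + v (σ i))
      ≤ 2 • (∑ i ∈ univ.filter p, u i + ∑ i ∈ univ.filter p, v i) -
          (∑ i, u i + ∑ i, v i) := by
        rw [twist_eq, htotal]
        exact sub_le_sub_right (nsmul_le_nsmul_right hupper 2) _
    _ = twist p u + twist p v := by
        rw [twist_eq, twist_eq]
        abel

end

theorem normalized_twist_merge_le_average_general (n : ℕ)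
    (A B C : Fin 26 → ℕ)
    (hAmono : Monotone A) (hBmono : Monotone B)
    (σ : Equiv.Perm (Fin 26)) (hperm : C = (A + B) ∘ σ) :
    (1 / (2 * (n : ℚ))) *
        ((∑ i ∈ Finset.univ.filter (fun i : Fin 26 => 13 ≤ (i : ℕ)), (C i : ℚ)) -
          ∑ i ∈ Finset.univ.filter (fun i : Fin 26 => (i : ℕ) < 13), (C i : ℚ)) ≤
      (1 / 2) *
        ((1 / (n : ℚ)) *
            ((∑ i ∈ Finset.univ.filter (fun i : Fin 26 => 13 ≤ (i : ℕ)), (A i : ℚ)) -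
              ∑ i ∈ Finset.univ.filter (fun i : Fin 26 => (i : ℕ) < 13), (A i : ℚ)) +
          (1 / (n : ℚ)) *
            ((∑ i ∈ Finset.univ.filter (fun i : Fin 26 => 13 ≤ (i : ℕ)), (B i : ℚ)) -
              ∑ i ∈ Finset.univ.filter (fun i : Fin 26 => (i : ℕ) < 13), (B i : ℚ))) := by
  have hupper : Monotone fun i : Fin 26 => 13 ≤ (i : ℕ) := fun _ _ hij h => h.trans hij
  have hA : Monotone fun i => (A i : ℚ) := Nat.mono_cast.comp hAmono
  have hB : Monotone fun i => (B i : ℚ) := Nat.mono_cast.comp hBmono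
  have hmerge := twist_comp_perm_add_le hupper hA hB σ
  simp only [twist, not_le] at hmerge
  subst hperm
  push_cast [Function.comp_apply, Pi.add_apply]
  calc _ ≤ 1 / (2 * (n : ℚ)) * (_ + _) := mul_le_mul_of_nonneg_left hmerge (by positivity)
    _ = _ := by ring

/-- Lemma 2.1, normalized form for two equal halves: the normalized twist of the
merged sorted vector `C` is at most the average of the normalized twists of the
two sorted vectors `A` and `B`, each of total mass `n > 0`. -/
theorem normalized_twist_merge_le_average (n : ℕ) (hn : 0 < n)
    (A B C : Fin 26 → ℕ)
    (hAmono : Monotone A) (hBmono : Monotone B)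
    (hA : ∑ i, A i = n) (hB : ∑ i, B i = n)
    (σ : Equiv.Perm (Fin 26)) (hperm : C = (A + B) ∘ σ) (hCmono : Monotone C) :
    (1 / (2 * (n : ℚ))) *
        ((∑ i ∈ Finset.univ.filter (fun i : Fin 26 => 13 ≤ (i : ℕ)), (C i : ℚ)) -
          ∑ i ∈ Finset.univ.filter (fun i : Fin 26 => (i : ℕ) < 13), (C i : ℚ)) ≤
      (1 / 2) *
        ((1 / (n : ℚ)) *
            ((∑ i ∈ Finset.univ.filter (fun i : Fin 26 => 13 ≤ (i : ℕ)), (A i : ℚ)) -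
              ∑ i ∈ Finset.univ.filter (fun i : Fin 26 => (i : ℕ) < 13), (A i : ℚ)) +
          (1 / (n : ℚ)) *
            ((∑ i ∈ Finset.univ.filter (fun i : Fin 26 => 13 ≤ (i : ℕ)), (B i : ℚ)) -
              ∑ i ∈ Finset.univ.filter (fun i : Fin 26 => (i : ℕ) < 13), (B i : ℚ))) :=
  normalized_twist_merge_le_average_general n A B C hAmono hBmono σ hperm
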